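/- Let X be countable with enumeration (xₙ)ₙ∈ℕ, ▷ a relation between finite subsets of X and elements of X, and Q a predicate on X. Suppose Q(⟨∅⟩) holds and M ⊆ X satisfies, for all n ∈ ℕ: xₙ ∈ M if and only if Q((M↾n) ⊕ xₙ). Then, setting Mₙ := ⟨M↾n⟩, the property Q(Mₙ) holds for every n ∈ ℕ. -/

import Mathlib

/-- `S ▷* y` : there is a finite subset `A ⊆ S` with `A ▷ y`. -/
def GenFrom {X : Type*} (rel : Finset X → X → Prop) (S : Set X) (y : X) : Prop :=
  ∃ A : Finset X, ↑A ⊆ S ∧ rel A y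

/-- The iterates of the closure operation. -/
def ClosureSeq {X : Type*} (rel : Finset X → X → Prop) (S : Set X) : ℕ → Set X
  | 0 => S
  | i + 1 => ClosureSeq rel S i ∪ {y | GenFrom rel (ClosureSeq rel S i) y}

/-- The closure `⟨S⟩` of `S` with respect to `▷`. -/
def Closure {X : Type*} (rel : Finset X → X → Prop) (S : Set X) : Set X :=
  ⋃ i, ClosureSeq rel S i

/-- `S ⊕ x := ⟨S ∪ {x}⟩`. -/
def Oplus {X : Type*} (rel : Finset X → X → Prop) (S : Set X) (x : X) : Set X :=
  Closure rel (S ∪ {x})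

/-- `S` is closed w.r.t. `▷*`. -/
def IsRelClosed {X : Type*} (rel : Finset X → X → Prop) (S : Set X) : Prop :=
  ∀ y, GenFrom rel S y → y ∈ S

/-- The initial segment `S↾n = S ∩ {x_m | m < n}` of `S` w.r.t. the enumeration `x`. -/
def InitSeg {X : Type*} (x : ℕ → X) (S : Set X) (n : ℕ) : Set X :=
  S ∩ {y | ∃ m < n, x m = y}

section InitSeg

variable {X : Type*} (x : ℕ → X) (S : Set X)

theorem initSeg_zero : InitSeg x S 0 = ∅ := by
  simp [InitSeg]

theorem initSeg_succ (n : ℕ) :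
    InitSeg x S (n + 1) = InitSeg x S n ∪ (S ∩ {x n}) := by
  ext y
  simp only [InitSeg, Set.mem_union, Set.mem_inter_iff, Set.mem_ofPred_eq,
    Set.mem_singleton_iff, Nat.lt_succ_iff_lt_or_eq]
  grind

theorem initSeg_succ_of_mem {n : ℕ} (h : x n ∈ S) :
    InitSeg x S (n + 1) = InitSeg x S n ∪ {x n} := by
  rw [initSeg_succ, Set.inter_eq_right.mpr (Set.singleton_subset_iff.mpr h)]

theorem initSeg_succ_of_notMem {n : ℕ} (h : x n ∉ S) :
    InitSeg x S (n + 1) = InitSeg x S n := by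
  rw [initSeg_succ, Set.inter_singleton_eq_empty.mpr h, Set.union_empty]

end InitSeg

theorem stmt6_general {X : Type*} (x : ℕ → X)
    (rel : Finset X → X → Prop) (Q : X → Prop) (M : Set X)
    (hQ : ∀ y ∈ Closure rel (∅ : Set X), Q y)
    (hM : ∀ n : ℕ, x n ∈ M ↔ ∀ y ∈ Oplus rel (InitSeg x M n) (x n), Q y) :
    ∀ n : ℕ, ∀ y ∈ Closure rel (InitSeg x M n), Q y := by
  intro n
  induction n with
  | zero => rwa [initSeg_zero]
  | succ n ih =>
    by_cases hmem : x n ∈ M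
    · rw [initSeg_succ_of_mem x M hmem]
      exact (hM n).mp hmem
    · rw [initSeg_succ_of_notMem x M hmem]
      exact ih

/-- If `Q(⟨∅⟩)` and `M` satisfies `xₙ ∈ M ↔ Q((M↾n) ⊕ xₙ)` for all `n`, then setting
`Mₙ := ⟨M↾n⟩` we have `Q(Mₙ)` for every `n`. -/
theorem stmt6 {X : Type*} (x : ℕ → X) (hx : Function.Surjective x)
    (rel : Finset X → X → Prop) (Q : X → Prop) (M : Set X)
    (hQ : ∀ y ∈ Closure rel (∅ : Set X), Q y)
    (hM : ∀ n : ℕ, x n ∈ M ↔ ∀ y ∈ Oplus rel (InitSeg x M n) (x n), Q y) :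
    ∀ n : ℕ, ∀ y ∈ Closure rel (InitSeg x M n), Q y :=
  stmt6_general x rel Q M hQ hM
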